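/- If a cancellative semigroup S satisfies the identity U_n(xy, yx) ≐ V_n(xy, yx) for some n ≥ 1, then S is commutative. -/
import Mathlib


variable {S : Type*}

/-- `U₁(p, q) = pqppq`. -/
def U1 [Mul S] (p q : S) : S := p * q * p * p * q

/-- `V₁(p, q) = pqqpq`. -/
def V1 [Mul S] (p q : S) : S := p * q * q * p * q

mutual
  /-- The words `U_n(p, q)`, defined by `U₀(p,q) = p` and
  `U_n(p,q) = U₁(U_{n-1}(p,q), V_{n-1}(p,q))`. -/
  def U [Mul S] : ℕ → S → S → S
    | 0, p, _ => p
    | n + 1, p, q => U1 (U n p q) (V n p q)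
  /-- The words `V_n(p, q)`, defined by `V₀(p,q) = q` and
  `V_n(p,q) = V₁(U_{n-1}(p,q), V_{n-1}(p,q))`. -/
  def V [Mul S] : ℕ → S → S → S
    | 0, _, q => q
    | n + 1, p, q => V1 (U n p q) (V n p q)
end


private lemma aux_UV [Semigroup S]
    (hleft : ∀ a b c : S, a * b = a * c → b = c)
    (hright : ∀ a b c : S, b * a = c * a → b = c) :
    ∀ n : ℕ, (∀ x y : S, U n (x * y) (y * x) = V n (x * y) (y * x)) →
      ∀ x y : S, x * y = y * x := by
  intro n
  induction n with
  | zero => intro h; simpa [U, V] using h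
  | succ n ih =>
    intro h
    apply ih
    intro x y
    have hxy := h x y
    set P := U n (x * y) (y * x) with hP
    set Q := V n (x * y) (y * x) with hQ
    have h1 : (P * Q) * (P * (P * Q)) = (P * Q) * (Q * (P * Q)) := by
      simpa [U, V, U1, V1, mul_assoc] using hxy
    exact hright (P * Q) P Q (hleft (P * Q) _ _ h1)

/-- If a cancellative semigroup satisfies the identity `U_n(xy, yx) ≐ V_n(xy, yx)`
for some `n ≥ 1`, then it is commutative. -/
theorem comm_of_cancellative_of_UV_identity [Semigroup S]
    (hleft : ∀ a b c : S, a * b = a * c → b = c)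
    (hright : ∀ a b c : S, b * a = c * a → b = c)
    (n : ℕ) (hn : 1 ≤ n)
    (h : ∀ x y : S, U n (x * y) (y * x) = V n (x * y) (y * x)) :
    ∀ x y : S, x * y = y * x := by
  exact aux_UV hleft hright n h
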